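/- arXiv:math/0209130 — 2 statements merged into one kernel-verified Lean document; each statement's English description precedes it below -/
import Mathlib

section
/- Let (N,τ) be a finite von Neumann algebra, H a Hilbert N-bimodule, ξ ∈ H a vector bounded from the right, and φ = φ_{(H,ξ)} the associated completely positive map on N (so that τ(φ(x)y) = ⟨xξy, ξ⟩). Then for every unitary u ∈ N: ‖φ(u) − u‖₂² ≤ ‖[u,ξ]‖² + (‖φ(1)‖₂² − 1), provided ‖ξ‖ = 1. -/
/-!
Complete positivity of `φ` applied to the positive matrix
`[[1, u], [u*, 1]] = [[1, u], [0, 0]]* [[1, u], [0, 0]]` writes `φ(1)` and `φ(u)` as entries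
of a Gram matrix `z* z`; the trace Cauchy–Schwarz inequality for Gram entries, i.e.
`∑ᵢₗ ‖bᵢ bₗ* - aᵢ aₗ*‖₂² ≥ 0` for the columns `a`, `b` of `z`, then gives
`τ(φ(u)* φ(u)) ≤ τ(φ(1)²)`. Expanding `‖φ(u) - u‖₂²` and `‖uξ - ξu‖² = 2 - 2 Re⟨uξ, ξu⟩`,
both cross terms equal `Re τ(φ(u) u*)`, because `⟨xξ, ξy⟩ = τ(φ(x) y*)`.
-/

open scoped ComplexOrder

def IsPosElem {A : Type*} [Ring A] [StarRing A] (x : A) : Prop := ∃ y : A, x = star y * y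

def IsCPMap {A : Type*} [Ring A] [StarRing A] [Algebra ℂ A] (φ : A →ₗ[ℂ] A) : Prop :=
  ∀ (n : ℕ) (x : Matrix (Fin n) (Fin n) A),
    (∃ y : Matrix (Fin n) (Fin n) A, x = star y * y) →
      ∃ y : Matrix (Fin n) (Fin n) A, x.map φ = star y * y

structure IsFaithfulTracialState {A : Type*} [Ring A] [StarRing A] [Algebra ℂ A]
    (τ : A →ₗ[ℂ] ℂ) : Prop where
  tracial : ∀ x y : A, τ (x * y) = τ (y * x)
  pos : ∀ x : A, 0 ≤ τ (star x * x)
  faithful : ∀ x : A, τ (star x * x) = 0 → x = 0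
  unital : τ 1 = 1

noncomputable def trNorm2 {A : Type*} [Ring A] [StarRing A] [Algebra ℂ A]
    (τ : A →ₗ[ℂ] ℂ) (x : A) : ℝ := Real.sqrt (τ (star x * x)).re

section TracialState

variable {A : Type*} [Ring A] [StarRing A] [Algebra ℂ A] {τ : A →ₗ[ℂ] ℂ}

namespace IsFaithfulTracialState

theorem re_map_star_mul_self_nonneg (hτ : IsFaithfulTracialState τ) (x : A) :
    0 ≤ (τ (star x * x)).re :=
  (Complex.nonneg_iff.mp (hτ.pos x)).1

theorem sum_sum_map_mul_mul_star {ι : Type*} [Fintype ι] (hτ : IsFaithfulTracialState τ)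
    (c d e f : ι → A) :
    ∑ i, ∑ l, τ (c l * (star (d i) * e i) * star (f l)) =
      τ ((∑ l, star (f l) * c l) * ∑ i, star (d i) * e i) := by
  simp only [Finset.sum_mul_sum, map_sum]
  rw [Finset.sum_comm]
  refine Finset.sum_congr rfl fun l _ => Finset.sum_congr rfl fun i _ => ?_
  rw [hτ.tracial, ← mul_assoc, mul_assoc]

theorem two_mul_re_map_gram_le {ι : Type*} [Fintype ι] (hτ : IsFaithfulTracialState τ)
    (a b : ι → A) :
    2 * (τ ((∑ i, star (b i) * a i) * ∑ i, star (a i) * b i)).re ≤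
      (τ ((∑ i, star (a i) * a i) * ∑ i, star (a i) * a i)).re +
        (τ ((∑ i, star (b i) * b i) * ∑ i, star (b i) * b i)).re := by
  set D : ι → ι → A := fun i l => b i * star (b l) - a i * star (a l)
  have hexpand : ∀ i l, star (D i l) * D i l =
      b l * (star (b i) * b i) * star (b l) - b l * (star (b i) * a i) * star (a l) -
        a l * (star (a i) * b i) * star (b l) + a l * (star (a i) * a i) * star (a l) := by
    intro i l
    simp only [D, star_sub, star_mul, star_star]
    noncomm_ring
  have hsum : ∑ i, ∑ l, τ (star (D i l) * D i l) =
      τ ((∑ l, star (b l) * b l) * ∑ i, star (b i) * b i) -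
        τ ((∑ l, star (a l) * b l) * ∑ i, star (b i) * a i) -
        τ ((∑ l, star (b l) * a l) * ∑ i, star (a i) * b i) +
        τ ((∑ l, star (a l) * a l) * ∑ i, star (a i) * a i) := by
    simp only [hexpand, map_add, map_sub, Finset.sum_add_distrib, Finset.sum_sub_distrib,
      hτ.sum_sum_map_mul_mul_star]
  have hnonneg : 0 ≤ (∑ i, ∑ l, τ (star (D i l) * D i l)).re := by
    simp only [Complex.re_sum]
    exact Finset.sum_nonneg fun i _ =>
      Finset.sum_nonneg fun l _ => hτ.re_map_star_mul_self_nonneg _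
  rw [hsum, hτ.tracial (∑ l, star (a l) * b l)] at hnonneg
  simp only [Complex.add_re, Complex.sub_re] at hnonneg
  linarith

end IsFaithfulTracialState

theorem trNorm2_sq (hτ : IsFaithfulTracialState τ) (x : A) :
    trNorm2 τ x ^ 2 = (τ (star x * x)).re :=
  Real.sq_sqrt (hτ.re_map_star_mul_self_nonneg x)

theorem trNorm2_sub_sq (hτ : IsFaithfulTracialState τ) (x y : A) :
    trNorm2 τ (x - y) ^ 2 =
      trNorm2 τ x ^ 2 + trNorm2 τ y ^ 2 - (τ (star x * y)).re - (τ (star y * x)).re := by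
  have hexpand : star (x - y) * (x - y) = star x * x + star y * y - star x * y - star y * x := by
    rw [star_sub]
    noncomm_ring
  simp only [trNorm2_sq hτ, hexpand, map_add, map_sub, Complex.add_re, Complex.sub_re]

end TracialState

namespace IsCPMap

variable {A : Type*} [Ring A] [StarRing A] [Algebra ℂ A] {φ : A →ₗ[ℂ] A}

theorem exists_gram_of_unitary (hφ : IsCPMap φ) {u : A} (hu : star u * u = 1) :
    ∃ z : Matrix (Fin 2) (Fin 2) A, (Matrix.of ![![1, u], ![star u, 1]]).map φ = star z * z :=
  hφ 2 _ ⟨Matrix.of ![![1, u], ![0, 0]], by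
    ext i j
    fin_cases i <;> fin_cases j <;>
      simp [Matrix.mul_apply, Fin.sum_univ_two, Matrix.star_apply, hu]⟩

theorem gram_entries_of_unitary (hφ : IsCPMap φ) {u : A} (hu : star u * u = 1) :
    ∃ a b : Fin 2 → A, φ 1 = ∑ i, star (a i) * a i ∧ φ 1 = ∑ i, star (b i) * b i ∧
      φ u = ∑ i, star (a i) * b i ∧ φ (star u) = ∑ i, star (b i) * a i := by
  obtain ⟨z, hz⟩ := hφ.exists_gram_of_unitary hu
  have entry (i j : Fin 2) := congrFun (congrFun hz i) j
  refine ⟨fun i => z i 0, fun i => z i 1, ?_, ?_, ?_, ?_⟩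
  · simpa [Matrix.mul_apply, Matrix.star_apply] using entry 0 0
  · simpa [Matrix.mul_apply, Matrix.star_apply] using entry 1 1
  · simpa [Matrix.mul_apply, Matrix.star_apply] using entry 0 1
  · simpa [Matrix.mul_apply, Matrix.star_apply] using entry 1 0

theorem star_map_of_unitary (hφ : IsCPMap φ) {u : A} (hu : star u * u = 1) :
    star (φ u) = φ (star u) := by
  obtain ⟨a, b, -, -, hφu, hφu'⟩ := hφ.gram_entries_of_unitary hu
  simp [hφu, hφu']

theorem re_map_star_mul_self_le (hφ : IsCPMap φ) {τ : A →ₗ[ℂ] ℂ}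
    (hτ : IsFaithfulTracialState τ) {u : A} (hu : star u * u = 1) :
    (τ (star (φ u) * φ u)).re ≤ (τ (star (φ 1) * φ 1)).re := by
  obtain ⟨a, b, hφa, hφb, hφu, hφu'⟩ := hφ.gram_entries_of_unitary hu
  have h1 : star (φ 1) = φ 1 := by simpa using hφ.star_map_of_unitary (u := 1) (by simp)
  have hcs := hτ.two_mul_re_map_gram_le a b
  rw [← hφa, ← hφb, ← hφu, ← hφu', ← hφ.star_map_of_unitary hu] at hcs
  rw [h1]
  linarith

end IsCPMap

section Bimodule

variable {H : Type*} [NormedAddCommGroup H] [InnerProductSpace ℂ H]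

theorem norm_apply_eq_of_inner_adjoint {T S : H →L[ℂ] H}
    (hTS : ∀ ξ η : H, inner ℂ (T ξ) η = inner ℂ ξ (S η)) (hST : S.comp T = 1) (ξ : H) :
    ‖T ξ‖ = ‖ξ‖ := by
  have hsq : ‖T ξ‖ ^ 2 = ‖ξ‖ ^ 2 := by
    rw [← inner_self_eq_norm_sq (𝕜 := ℂ), ← inner_self_eq_norm_sq (𝕜 := ℂ), hTS,
      ← ContinuousLinearMap.comp_apply, hST, one_apply_eq_self]
  exact (pow_left_inj₀ (norm_nonneg _) (norm_nonneg _) two_ne_zero).mp hsq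

variable {A : Type*} [Ring A] [StarRing A] [Algebra ℂ A] {τ : A →ₗ[ℂ] ℂ} {φ : A →ₗ[ℂ] A}
  {L R : A → H →L[ℂ] H} {ξ : H}

theorem inner_left_right_eq_map_mul_star
    (hRstar : ∀ (x : A) (ξ η : H), (inner ℂ (R x ξ) η : ℂ) = inner ℂ ξ (R (star x) η))
    (hLR : ∀ x y : A, (L x).comp (R y) = (R y).comp (L x))
    (hφdef : ∀ x y : A, τ (φ x * y) = inner ℂ (L x (R y ξ)) ξ) (x y : A) :
    inner ℂ (L x ξ) (R y ξ) = τ (φ x * star y) := by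
  rw [hφdef, ← inner_conj_symm, hRstar, ← ContinuousLinearMap.comp_apply, ← hLR,
    ContinuousLinearMap.comp_apply, inner_conj_symm]

theorem map_star_mul_eq_conj_inner
    (hLstar : ∀ (x : A) (ξ η : H), (inner ℂ (L x ξ) η : ℂ) = inner ℂ ξ (L (star x) η))
    (hφdef : ∀ x y : A, τ (φ x * y) = inner ℂ (L x (R y ξ)) ξ) (x y : A) :
    τ (φ (star x) * y) = (starRingEnd ℂ) (inner ℂ (L x ξ) (R y ξ)) := by
  rw [hφdef, hLstar, star_star, inner_conj_symm]

end Bimodule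

theorem stmt4_general {A : Type*} [Ring A] [StarRing A] [Algebra ℂ A]
    (τ : A →ₗ[ℂ] ℂ) (hτ : IsFaithfulTracialState τ)
    {H : Type*} [NormedAddCommGroup H] [InnerProductSpace ℂ H]
    (L R : A → H →L[ℂ] H)
    (hLmul : ∀ x y : A, L (x * y) = (L x).comp (L y)) (hL1 : L 1 = 1)
    (hLstar : ∀ (x : A) (ξ η : H), (inner ℂ (L x ξ) η : ℂ) = inner ℂ ξ (L (star x) η))
    (hRmul : ∀ x y : A, R (x * y) = (R y).comp (R x)) (hR1 : R 1 = 1)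
    (hRstar : ∀ (x : A) (ξ η : H), (inner ℂ (R x ξ) η : ℂ) = inner ℂ ξ (R (star x) η))
    (hLR : ∀ x y : A, (L x).comp (R y) = (R y).comp (L x))
    (ξ : H) (hξ : ‖ξ‖ = 1)
    (φ : A →ₗ[ℂ] A) (hφ : IsCPMap φ)
    (hφdef : ∀ x y : A, τ (φ x * y) = inner ℂ (L x (R y ξ)) ξ)
    (u : A) (hu : star u * u = 1 ∧ u * star u = 1) :
    (trNorm2 τ (φ u - u)) ^ 2 ≤ ‖L u ξ - R u ξ‖ ^ 2 + ((trNorm2 τ (φ 1)) ^ 2 - 1) := by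
  obtain ⟨hu₁, hu₂⟩ := hu
  have hLu : ‖L u ξ‖ = 1 := by
    rw [norm_apply_eq_of_inner_adjoint (hLstar u) (by rw [← hLmul, hu₁, hL1]), hξ]
  have hRu : ‖R u ξ‖ = 1 := by
    rw [norm_apply_eq_of_inner_adjoint (hRstar u) (by rw [← hRmul, hu₂, hR1]), hξ]
  have hcross : (τ (star (φ u) * u)).re = (τ (φ u * star u)).re := by
    rw [hφ.star_map_of_unitary hu₁, map_star_mul_eq_conj_inner hLstar hφdef,
      inner_left_right_eq_map_mul_star hRstar hLR hφdef, Complex.conj_re]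
  have hcross' : τ (star u * φ u) = τ (φ u * star u) := hτ.tracial _ _
  have hunit : trNorm2 τ u ^ 2 = 1 := by rw [trNorm2_sq hτ, hu₁, hτ.unital, Complex.one_re]
  rw [trNorm2_sub_sq hτ, norm_sub_sq (𝕜 := ℂ), hLu, hRu, hcross, hcross', hunit,
    inner_left_right_eq_map_mul_star hRstar hLR hφdef, trNorm2_sq hτ, trNorm2_sq hτ]
  have hφu := hφ.re_map_star_mul_self_le hτ hu₁
  simp only [RCLike.re_to_complex]
  linarith

/-- let `H` be a Hilbert `N`-bimodule (commuting normal left action `L`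
and right action `R`), `ξ ∈ H` a unit vector bounded from the right, and
`φ = φ_{(H,ξ)}` the associated completely positive map, characterized by
`τ(φ(x) y) = ⟨x ξ y, ξ⟩`.  Then for every unitary `u`:
`‖φ(u) - u‖₂² ≤ ‖[u,ξ]‖² + (‖φ(1)‖₂² - 1)`. -/
theorem stmt4 {A : Type*} [Ring A] [StarRing A] [Algebra ℂ A]
    (τ : A →ₗ[ℂ] ℂ) (hτ : IsFaithfulTracialState τ)
    {H : Type*} [NormedAddCommGroup H] [InnerProductSpace ℂ H] [CompleteSpace H]
    (L R : A → H →L[ℂ] H)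
    (hLmul : ∀ x y : A, L (x * y) = (L x).comp (L y)) (hL1 : L 1 = 1)
    (hLadd : ∀ x y : A, L (x + y) = L x + L y)
    (hLstar : ∀ (x : A) (ξ η : H), (inner ℂ (L x ξ) η : ℂ) = inner ℂ ξ (L (star x) η))
    (hRmul : ∀ x y : A, R (x * y) = (R y).comp (R x)) (hR1 : R 1 = 1)
    (hRadd : ∀ x y : A, R (x + y) = R x + R y)
    (hRstar : ∀ (x : A) (ξ η : H), (inner ℂ (R x ξ) η : ℂ) = inner ℂ ξ (R (star x) η))
    (hLR : ∀ x y : A, (L x).comp (R y) = (R y).comp (L x))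
    (ξ : H) (hξ : ‖ξ‖ = 1)
    (c : ℝ) (hbd : ∀ y : A, ‖R y ξ‖ ^ 2 ≤ c * (τ (star y * y)).re)
    (φ : A →ₗ[ℂ] A) (hφ : IsCPMap φ)
    (hφdef : ∀ x y : A, τ (φ x * y) = inner ℂ (L x (R y ξ)) ξ)
    (u : A) (hu : star u * u = 1 ∧ u * star u = 1) :
    (trNorm2 τ (φ u - u)) ^ 2 ≤ ‖L u ξ - R u ξ‖ ^ 2 + ((trNorm2 τ (φ 1)) ^ 2 - 1) :=
  stmt4_general τ hτ L R hLmul hL1 hLstar hRmul hR1 hRstar hLR ξ hξ φ hφ hφdef u hu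
end

section
/- Let (N,τ) be a finite von Neumann algebra and φ a normal completely positive map on N with τ∘φ ≤ τ. Let φ* be the adjoint completely positive map, determined by τ(φ*(x)y) = τ(xφ(y)) for all x,y ∈ N. Then for every unitary u ∈ N: ‖φ*(u) − u‖₂² ≤ 2‖φ(u) − u‖₂. -/
/- Common framework: a finite von Neumann algebra is encoded as a unital complex
`*`-algebra `A` together with a faithful (tracial) state `τ`.  Positivity of elements,
complete positivity of maps and the trace 2-norm are defined below. -/

open scoped ComplexOrder

/- Write `v = ψ u` and `w = φ u - u`, so that `‖v - u‖₂² = τ(v* v) - 2 Re τ(u* v) + 1`.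
Complete positivity of `φ` on `!![1, c; c*, c* c]` with `c = v*`, together with `τ ∘ φ ≤ τ`,
gives `τ(v* v) ≤ 1`; adjointness gives `Re τ(u* v) = Re τ(u* φ(u)) = 1 + Re τ(u* w)`; and
Cauchy–Schwarz for the unit vector `u` gives `-Re τ(u* w) ≤ ‖w‖₂`. Hence
`‖v - u‖₂² ≤ -2 Re τ(u* w) ≤ 2 ‖w‖₂`. -/

section Trace

variable {A : Type*} [Ring A] [StarRing A] [Algebra ℂ A] {τ : A →ₗ[ℂ] ℂ}

/- The star operation is not assumed to be conjugate-linear; with `J = algebraMap ℂ A I` and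
`s = star J`, the element `q = s * J` is a self-adjoint square root of `1`, and
`star (s + J) * (s + J) = -(star (1 - q) * (1 - q))`, which a faithful positive functional
forces to vanish. -/
theorem star_algebraMap_I (hpos : ∀ x : A, 0 ≤ τ (star x * x))
    (hfaith : ∀ x : A, τ (star x * x) = 0 → x = 0) :
    star (algebraMap ℂ A Complex.I) = -algebraMap ℂ A Complex.I := by
  set J := algebraMap ℂ A Complex.I
  set s := star J
  have hJJ : J * J = -1 := by rw [← map_mul, Complex.I_mul_I, map_neg, map_one]
  have hss : s * s = -1 := by rw [← star_mul, hJJ, star_neg, star_one]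
  have hJs : J * s = s * J := Algebra.commutes _ _
  have hq : star (s * J) = s * J := by rw [star_mul, star_star, ← hJs]
  have hsum : star (1 - s * J) * (1 - s * J) + star (s + J) * (s + J) = 0 := by
    have hqq : s * J * (s * J) = 1 := calc
      s * J * (s * J) = s * (J * s) * J := by noncomm_ring
      _ = s * s * (J * J) := by rw [hJs]; noncomm_ring
      _ = 1 := by rw [hss, hJJ, neg_mul_neg, one_mul]
    rw [star_sub, star_one, hq, star_add, star_star]
    calc (1 - s * J) * (1 - s * J) + (J + s) * (s + J)
        = 1 + s * J * (s * J) + J * J + s * s + (J * s - s * J) := by noncomm_ring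
      _ = 0 := by rw [hqq, hJJ, hss, hJs, sub_self]; norm_num
  have hτsum := congrArg τ hsum
  rw [map_add, map_zero] at hτsum
  have h0 : τ (star (s + J) * (s + J)) = 0 :=
    le_antisymm (by rw [← hτsum]; exact le_add_of_nonneg_left (hpos _)) (hpos _)
  exact eq_neg_of_add_eq_zero_left (hfaith _ h0)

/- Polarization: `τ(z* z)` is real both for `z = x + y` and for `z = x + I • y`. -/
theorem map_star_mul_eq_conj (hpos : ∀ x : A, 0 ≤ τ (star x * x))
    (hfaith : ∀ x : A, τ (star x * x) = 0 → x = 0) (x y : A) :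
    τ (star y * x) = starRingEnd ℂ (τ (star x * y)) := by
  have hstarI : ∀ a : A, star (Complex.I • a) = -(Complex.I • star a) := by
    intro a
    rw [Algebra.smul_def, star_mul, star_algebraMap_I hpos hfaith, mul_neg,
      ← Algebra.commutes, ← Algebra.smul_def]
  have him (z : A) : (τ (star z * z)).im = 0 := ((Complex.nonneg_iff.mp (hpos z)).2).symm
  have h1 := him (x + y)
  have h2 := him (x + Complex.I • y)
  have hx := him x
  have hy := him y
  rw [star_add, add_mul, mul_add, mul_add, map_add, map_add, map_add, Complex.add_im,
    Complex.add_im, Complex.add_im, hx, hy] at h1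
  rw [star_add, hstarI, add_mul, mul_add, mul_add, neg_mul, neg_mul, smul_mul_assoc,
    mul_smul_comm, smul_mul_assoc, mul_smul_comm, smul_smul, Complex.I_mul_I] at h2
  simp only [map_add, map_neg, map_smul, smul_eq_mul, neg_one_mul, neg_neg, Complex.add_im,
    Complex.neg_im, Complex.mul_im, Complex.I_re, Complex.I_im, hx, hy] at h2
  apply Complex.ext <;> simp only [Complex.conj_re, Complex.conj_im] <;> linarith

theorem sq_trNorm2 (hpos : ∀ x : A, 0 ≤ τ (star x * x)) (x : A) :
    trNorm2 τ x ^ 2 = (τ (star x * x)).re :=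
  Real.sq_sqrt (Complex.nonneg_iff.mp (hpos x)).1

theorem sq_trNorm2_sub (hpos : ∀ x : A, 0 ≤ τ (star x * x))
    (hherm : ∀ x y : A, τ (star y * x) = starRingEnd ℂ (τ (star x * y))) (x y : A) :
    trNorm2 τ (x - y) ^ 2
      = (τ (star x * x)).re - 2 * (τ (star y * x)).re + (τ (star y * y)).re := by
  have hexp : star (x - y) * (x - y) = star x * x - star x * y - star y * x + star y * y := by
    rw [star_sub]; noncomm_ring
  rw [sq_trNorm2 hpos, hexp, map_add, map_sub, map_sub, hherm y x]
  simp only [Complex.add_re, Complex.sub_re, Complex.conj_re]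
  ring

/- Cauchy–Schwarz for a unit vector `x`: the vector `z = y - τ(x* y) • x` is orthogonal to `x`,
and `τ(z* z) = τ(y* y) - |τ(x* y)|²`. -/
theorem norm_map_star_mul_le_trNorm2 (hpos : ∀ x : A, 0 ≤ τ (star x * x))
    (hherm : ∀ x y : A, τ (star y * x) = starRingEnd ℂ (τ (star x * y)))
    {x : A} (hx : τ (star x * x) = 1) (y : A) :
    ‖τ (star x * y)‖ ≤ trNorm2 τ y := by
  set t := τ (star x * y)
  set z := y - t • x
  have hxz : τ (star x * z) = 0 := by
    rw [mul_sub, mul_smul_comm, map_sub, map_smul, hx, smul_eq_mul, mul_one, sub_self]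
  have hzz : τ (star z * z) = starRingEnd ℂ (τ (star y * y)) - t * starRingEnd ℂ t := by
    have hzx : τ (star z * x) = 0 := by rw [hherm, hxz, map_zero]
    calc τ (star z * z) = τ (star z * (y - t • x)) := rfl
      _ = starRingEnd ℂ (τ (star y * (y - t • x))) := by
        rw [mul_sub, mul_smul_comm, map_sub, map_smul, hzx, smul_zero, sub_zero, hherm]
      _ = _ := by
        rw [mul_sub, mul_smul_comm, map_sub, map_smul, hherm x y, smul_eq_mul,
          map_sub (starRingEnd ℂ), map_mul (starRingEnd ℂ), Complex.conj_conj,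
          mul_comm (starRingEnd ℂ t)]
  have hnormSq : Complex.normSq t ≤ (τ (star y * y)).re := by
    have h := (Complex.nonneg_iff.mp (hpos z)).1
    rw [hzz, Complex.sub_re, Complex.conj_re, Complex.mul_conj, Complex.ofReal_re] at h
    linarith
  rw [Complex.norm_def]
  exact Real.sqrt_le_sqrt hnormSq

end Trace

section CompletelyPositive

variable {A : Type*} [Ring A] [StarRing A] [Algebra ℂ A] {φ : A →ₗ[ℂ] A}

/- Complete positivity applied to the Gram matrix `!![x, y; 0, 0]ᴴ * !![x, y; 0, 0]`. -/
theorem IsCPMap.exists_map_gram (hφ : IsCPMap φ) (x y : A) :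
    ∃ z : Matrix (Fin 2) (Fin 2) A,
      φ (star x * x) = star (z 0 0) * z 0 0 + star (z 1 0) * z 1 0 ∧
      φ (star x * y) = star (z 0 0) * z 0 1 + star (z 1 0) * z 1 1 ∧
      φ (star y * x) = star (z 0 1) * z 0 0 + star (z 1 1) * z 1 0 ∧
      φ (star y * y) = star (z 0 1) * z 0 1 + star (z 1 1) * z 1 1 := by
  have hgram : !![star x * x, star x * y; star y * x, star y * y]
      = star !![x, y; 0, 0] * !![x, y; 0, 0] := by
    rw [Matrix.star_eq_conjTranspose]
    ext i j
    fin_cases i <;> fin_cases j <;> simp [Matrix.mul_apply]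
  obtain ⟨z, hz⟩ := hφ 2 _ ⟨_, hgram⟩
  have hentry (i j : Fin 2) := congrFun (congrFun hz i) j
  simp only [Matrix.map_apply, Matrix.of_apply, Matrix.cons_val', Matrix.cons_val_fin_one,
    Matrix.mul_apply, Matrix.star_apply, Fin.sum_univ_two, Fin.forall_fin_two,
    Matrix.cons_val_zero, Matrix.cons_val_one] at hentry
  obtain ⟨⟨h00, h01⟩, h10, h11⟩ := hentry
  exact ⟨z, h00, h01, h10, h11⟩

theorem IsCPMap.map_star (hφ : IsCPMap φ) (x : A) : φ (star x) = star (φ x) := by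
  obtain ⟨z, -, h, h', -⟩ := hφ.exists_map_gram 1 x
  rw [star_one, one_mul] at h
  rw [mul_one] at h'
  rw [h, h', star_add, star_mul, star_mul, star_star, star_star]

/- The positivity of `φ` on the `2 × 2` matrix `!![1, c; star c, star c * c]`, tested against
the vector `(star a, -1)`. -/
theorem IsCPMap.two_mul_re_map_mul_le (hφ : IsCPMap φ) {τ : A →ₗ[ℂ] ℂ}
    (hpos : ∀ x : A, 0 ≤ τ (star x * x))
    (hherm : ∀ x y : A, τ (star y * x) = starRingEnd ℂ (τ (star x * y))) (a c : A) :
    2 * (τ (a * φ c)).re ≤ (τ (a * φ 1 * star a)).re + (τ (φ (star c * c))).re := by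
  obtain ⟨z, h11, h12, h21, h22⟩ := hφ.exists_map_gram 1 c
  rw [star_one, one_mul] at h11 h12
  rw [mul_one] at h21
  set p := z 0 0 * star a - z 0 1
  set q := z 1 0 * star a - z 1 1
  have hpq : star p * p + star q * q
      = a * φ 1 * star a - a * φ c - star (a * φ c) + φ (star c * c) := by
    rw [star_mul, ← hφ.map_star, h11, h12, h21, h22]
    simp only [p, q, star_sub, star_mul, star_star]
    noncomm_ring
  have h := add_nonneg (hpos p) (hpos q)
  rw [← map_add, hpq, map_add, map_sub, map_sub] at h
  have hstar : τ (star (a * φ c)) = starRingEnd ℂ (τ (a * φ c)) := by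
    simpa using hherm 1 (a * φ c)
  have h := (Complex.nonneg_iff.mp h).1
  rw [hstar] at h
  simp only [Complex.add_re, Complex.sub_re, Complex.conj_re] at h
  linarith

end CompletelyPositive

section Adjoint

variable {A : Type*} [Ring A] [StarRing A] [Algebra ℂ A] {τ : A →ₗ[ℂ] ℂ}
  {φ ψ : A →ₗ[ℂ] A}

theorem re_map_star_mul_adjoint (hφ : IsCPMap φ) (htr : ∀ x y : A, τ (x * y) = τ (y * x))
    (hherm : ∀ x y : A, τ (star y * x) = starRingEnd ℂ (τ (star x * y)))
    (hadj : ∀ x y : A, τ (ψ x * y) = τ (x * φ y)) (u : A) :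
    (τ (star u * ψ u)).re = (τ (star u * φ u)).re := by
  rw [htr, hadj, hφ.map_star, htr, hherm, Complex.conj_re]

theorem re_map_star_adjoint_mul_le_one (hφ : IsCPMap φ) (hτ : IsFaithfulTracialState τ)
    (hsub : ∀ x : A, IsPosElem x → τ (φ x) ≤ τ x)
    (hadj : ∀ x y : A, τ (ψ x * y) = τ (x * φ y)) {u : A} (hu : star u * u = 1) :
    (τ (star (ψ u) * ψ u)).re ≤ 1 := by
  have h := hφ.two_mul_re_map_mul_le hτ.pos (map_star_mul_eq_conj hτ.pos hτ.faithful) u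
    (star (ψ u))
  rw [← hadj, hτ.tracial (u * φ 1), ← mul_assoc, hu, one_mul, star_star] at h
  have hφ1 : (τ (φ 1)).re ≤ 1 := by
    simpa only [hτ.unital, Complex.one_re] using
      Complex.re_le_re (hsub 1 ⟨1, by rw [star_one, one_mul]⟩)
  have hφψ : (τ (φ (ψ u * star (ψ u)))).re ≤ (τ (ψ u * star (ψ u))).re :=
    Complex.re_le_re (hsub _ ⟨star (ψ u), by rw [star_star]⟩)
  rw [hτ.tracial (star (ψ u))]
  linarith

end Adjoint

/-- let `φ` be a completely positive map on `(N,τ)` with `τ∘φ ≤ τ`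
and let `φ* = ψ` be its adjoint, determined by `τ(ψ(x) y) = τ(x φ(y))`.  Then for
every unitary `u`: `‖φ*(u) - u‖₂² ≤ 2 ‖φ(u) - u‖₂`. -/
theorem stmt5 {A : Type*} [Ring A] [StarRing A] [Algebra ℂ A]
    (τ : A →ₗ[ℂ] ℂ) (hτ : IsFaithfulTracialState τ)
    (φ ψ : A →ₗ[ℂ] A) (hφ : IsCPMap φ)
    (hsub : ∀ x : A, IsPosElem x → τ (φ x) ≤ τ x)
    (hadj : ∀ x y : A, τ (ψ x * y) = τ (x * φ y))
    (u : A) (hu : star u * u = 1 ∧ u * star u = 1) :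
    (trNorm2 τ (ψ u - u)) ^ 2 ≤ 2 * trNorm2 τ (φ u - u) := by
  obtain ⟨hu, -⟩ := hu
  have hherm := map_star_mul_eq_conj hτ.pos hτ.faithful
  have huu : τ (star u * u) = 1 := by rw [hu, hτ.unital]
  have hψ := re_map_star_adjoint_mul_le_one hφ hτ hsub hadj hu
  have hcross := re_map_star_mul_adjoint hφ hτ.tracial hherm hadj u
  have hsplit : τ (star u * φ u) = τ (star u * (φ u - u)) + 1 := by
    rw [mul_sub, map_sub, huu, sub_add_cancel]
  have hCS : -(τ (star u * (φ u - u))).re ≤ trNorm2 τ (φ u - u) :=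
    (neg_le_abs _).trans ((Complex.abs_re_le_norm _).trans
      (norm_map_star_mul_le_trNorm2 hτ.pos hherm huu _))
  rw [sq_trNorm2_sub hτ.pos hherm, huu, hcross, hsplit, Complex.add_re, Complex.one_re]
  linarith
end
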